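/- Well-definedness on equal-length representatives: if σ has length m, σ' has length n, τ has length m, τ' has length n, σ ≈ τ, σ' ≈ τ', then σ^n ⪯ σ'^m if and only if τ^n ⪯ τ'^m. -/

import Mathlib

/-- Equivalence `≈` derived from the weak preorder `⪯`. -/
def eqv {X : Type*} (le : List X → List X → Prop) (σ τ : List X) : Prop :=
  le σ τ ∧ le τ σ

/-- Strict part `≺` of the weak preorder `⪯`. -/
def slt {X : Type*} (le : List X → List X → Prop) (σ τ : List X) : Prop :=
  le σ τ ∧ ¬ le τ σ

/-- n-fold repetition `σ^n` of a sequence. -/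
def rep {X : Type*} (σ : List X) (n : ℕ) : List X :=
  (List.replicate n σ).flatten

/-! By idempotence (2.1) and left congruence (2.3), `σ^k ≈ σ` for every `k ≥ 1`, so
`σ^n ≈ σ ≈ τ ≈ τ^n` and likewise `σ'^m ≈ τ'^m`; by transitivity `⪯` respects `≈` on both
sides. -/

section

variable {X : Type*} {le : List X → List X → Prop}

lemma rep_succ (σ : List X) (k : ℕ) : rep σ (k + 1) = σ ++ rep σ k := by
  simp [rep, List.replicate_succ]

lemma rep_succ_ne_nil {σ : List X} (hσ : σ ≠ []) (k : ℕ) : rep σ (k + 1) ≠ [] := by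
  rw [rep_succ]
  exact List.append_ne_nil_of_left_ne_nil hσ _

lemma eqv.symm {σ τ : List X} (h : eqv le σ τ) : eqv le τ σ :=
  ⟨h.2, h.1⟩

lemma eqv.trans
    (htrans : ∀ σ τ ρ : List X, σ ≠ [] → τ ≠ [] → ρ ≠ [] → le σ τ → le τ ρ → le σ ρ)
    {σ τ ρ : List X} (hσ : σ ≠ []) (hτ : τ ≠ []) (hρ : ρ ≠ [])
    (h : eqv le σ τ) (h' : eqv le τ ρ) : eqv le σ ρ :=
  ⟨htrans σ τ ρ hσ hτ hρ h.1 h'.1, htrans ρ τ σ hρ hτ hσ h'.2 h.2⟩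

lemma eqv_refl_of_append_self
    (htrans : ∀ σ τ ρ : List X, σ ≠ [] → τ ≠ [] → ρ ≠ [] → le σ τ → le τ ρ → le σ ρ)
    (ax21 : ∀ σ : List X, σ ≠ [] → eqv le (σ ++ σ) σ)
    {σ : List X} (hσ : σ ≠ []) : eqv le σ σ :=
  (ax21 σ hσ).symm.trans htrans hσ (List.append_ne_nil_of_left_ne_nil hσ σ) hσ (ax21 σ hσ)

lemma rep_succ_eqv_self
    (htrans : ∀ σ τ ρ : List X, σ ≠ [] → τ ≠ [] → ρ ≠ [] → le σ τ → le τ ρ → le σ ρ)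
    (ax21 : ∀ σ : List X, σ ≠ [] → eqv le (σ ++ σ) σ)
    (ax23 : ∀ σ σ' σ'' : List X, σ ≠ [] → σ' ≠ [] → σ'' ≠ [] → eqv le σ' σ'' →
      eqv le (σ ++ σ') (σ ++ σ''))
    {σ : List X} (hσ : σ ≠ []) (k : ℕ) : eqv le (rep σ (k + 1)) σ := by
  induction k with
  | zero => simpa [rep] using eqv_refl_of_append_self htrans ax21 hσ
  | succ k ih =>
    have hσσ : σ ++ σ ≠ [] := List.append_ne_nil_of_left_ne_nil hσ σ
    rw [rep_succ]
    exact (ax23 σ _ σ hσ (rep_succ_ne_nil hσ k) hσ ih).trans htrans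
      (List.append_ne_nil_of_left_ne_nil hσ _) hσσ hσ (ax21 σ hσ)

lemma rep_succ_eqv_rep_succ
    (htrans : ∀ σ τ ρ : List X, σ ≠ [] → τ ≠ [] → ρ ≠ [] → le σ τ → le τ ρ → le σ ρ)
    (ax21 : ∀ σ : List X, σ ≠ [] → eqv le (σ ++ σ) σ)
    (ax23 : ∀ σ σ' σ'' : List X, σ ≠ [] → σ' ≠ [] → σ'' ≠ [] → eqv le σ' σ'' →
      eqv le (σ ++ σ') (σ ++ σ''))
    {σ τ : List X} (hσ : σ ≠ []) (hτ : τ ≠ []) (h : eqv le σ τ) (k : ℕ) :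
    eqv le (rep σ (k + 1)) (rep τ (k + 1)) :=
  ((rep_succ_eqv_self htrans ax21 ax23 hσ k).trans htrans (rep_succ_ne_nil hσ k) hσ hτ h).trans
    htrans (rep_succ_ne_nil hσ k) hτ (rep_succ_ne_nil hτ k)
    (rep_succ_eqv_self htrans ax21 ax23 hτ k).symm

lemma le_congr_of_eqv
    (htrans : ∀ σ τ ρ : List X, σ ≠ [] → τ ≠ [] → ρ ≠ [] → le σ τ → le τ ρ → le σ ρ)
    {σ σ' τ τ' : List X} (hσ : σ ≠ []) (hσ' : σ' ≠ []) (hτ : τ ≠ []) (hτ' : τ' ≠ [])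
    (h : eqv le σ τ) (h' : eqv le σ' τ') : le σ σ' ↔ le τ τ' :=
  ⟨fun hle => htrans τ σ' τ' hτ hσ' hτ' (htrans τ σ σ' hτ hσ hσ' h.2 hle) h'.1,
    fun hle => htrans σ τ' σ' hσ hτ' hσ' (htrans σ τ τ' hσ hτ hτ' h.1 hle) h'.2⟩

end

theorem stmt16_general {X : Type*}
    (le : List X → List X → Prop)
    (htrans : ∀ σ τ ρ : List X, σ ≠ [] → τ ≠ [] → ρ ≠ [] → le σ τ → le τ ρ → le σ ρ)
    (ax21 : ∀ σ : List X, σ ≠ [] → eqv le (σ ++ σ) σ)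
    (ax23 : ∀ σ σ' σ'' : List X, σ ≠ [] → σ' ≠ [] → σ'' ≠ [] → eqv le σ' σ'' → eqv le (σ ++ σ') (σ ++ σ''))
    (m n : ℕ) (hm : 1 ≤ m) (hn : 1 ≤ n)
    (σ σ' τ τ' : List X)
    (hσ : σ.length = m) (hσ' : σ'.length = n) (hτ : τ.length = m) (hτ' : τ'.length = n)
    (h1 : eqv le σ τ) (h2 : eqv le σ' τ') :
    le (rep σ n) (rep σ' m) ↔ le (rep τ n) (rep τ' m) := by
  have ne_nil : ∀ (l : List X) (k : ℕ), l.length = k → 1 ≤ k → l ≠ [] :=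
    fun l k hl hk => List.ne_nil_of_length_pos (hl ▸ hk)
  have hσ0 := ne_nil σ m hσ hm
  have hσ'0 := ne_nil σ' n hσ' hn
  have hτ0 := ne_nil τ m hτ hm
  have hτ'0 := ne_nil τ' n hτ' hn
  obtain ⟨m, rfl⟩ := Nat.exists_eq_add_of_le' hm
  obtain ⟨n, rfl⟩ := Nat.exists_eq_add_of_le' hn
  exact le_congr_of_eqv htrans (rep_succ_ne_nil hσ0 n) (rep_succ_ne_nil hσ'0 m)
    (rep_succ_ne_nil hτ0 n) (rep_succ_ne_nil hτ'0 m)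
    (rep_succ_eqv_rep_succ htrans ax21 ax23 hσ0 hτ0 h1 n)
    (rep_succ_eqv_rep_succ htrans ax21 ax23 hσ'0 hτ'0 h2 m)

theorem stmt16 {X : Type*}
    (le : List X → List X → Prop)
    (hrefl : ∀ σ : List X, σ ≠ [] → le σ σ)
    (htrans : ∀ σ τ ρ : List X, σ ≠ [] → τ ≠ [] → ρ ≠ [] → le σ τ → le τ ρ → le σ ρ)
    (htotal : ∀ σ τ : List X, σ ≠ [] → τ ≠ [] → le σ τ ∨ le τ σ)
    (ax21 : ∀ σ : List X, σ ≠ [] → eqv le (σ ++ σ) σ)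
    (ax23 : ∀ σ σ' σ'' : List X, σ ≠ [] → σ' ≠ [] → σ'' ≠ [] → eqv le σ' σ'' → eqv le (σ ++ σ') (σ ++ σ''))
    (ax3 : ∀ σ σ' : List X, σ ≠ [] → σ' ≠ [] → eqv le (σ ++ σ') (σ' ++ σ))
    (m n : ℕ) (hm : 1 ≤ m) (hn : 1 ≤ n)
    (σ σ' τ τ' : List X)
    (hσ : σ.length = m) (hσ' : σ'.length = n) (hτ : τ.length = m) (hτ' : τ'.length = n)
    (h1 : eqv le σ τ) (h2 : eqv le σ' τ') :
    le (rep σ n) (rep σ' m) ↔ le (rep τ n) (rep τ' m) :=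
  stmt16_general le htrans ax21 ax23 m n hm hn σ σ' τ τ' hσ hσ' hτ hτ' h1 h2
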